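/- If G is a finite 2-connected simple graph with more than 7 cycles, then G has at least 10 cycles; in particular, no finite 2-connected simple graph has exactly 8 or exactly 9 cycles. -/

import Mathlib

/-!
The even edge sets of a finite graph `G` form a binary space `Z`, a subspace of the
`𝔽₂`-vector space of edge sets, so `#Z = 2 ^ k`; the cycles of `G` are exactly the circuits
(minimal nonempty members) of `Z`, so `G` has fewer than `2 ^ k` cycles.

If `G` is 2-connected, any two edges lie on a common cycle, i.e. `Z` is connected. By Tutte's
lemma an element of a connected binary space can be deleted or contracted keeping it connected,
and induction on the ground set then shows that a connected binary space with `2 ^ k` members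
has at least `k` circuits through each element and at least `(k + 1).choose 2` circuits.

More than seven cycles force `2 ^ k > 8`, so `k ≥ 4` and there are at least `5.choose 2 = 10`
cycles.
-/

open SimpleGraph

/-- A subgraph `H` of `G` is a cycle if it is nonempty, connected, and 2-regular. -/
def IsCycleSubgraph {V : Type} {G : SimpleGraph V} (H : G.Subgraph) : Prop :=
  H.verts.Nonempty ∧ H.Connected ∧ ∀ v ∈ H.verts, (H.neighborSet v).ncard = 2

/-- The number of cycles (cycle subgraphs) of a finite simple graph. -/
noncomputable def cycleCount {V : Type} [Fintype V] (G : SimpleGraph V) : ℕ :=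
  Set.ncard {H : G.Subgraph | IsCycleSubgraph H}

/-- A finite simple graph is 2-connected (inseparable) if it has at least 3 vertices,
is connected, and deleting any single vertex leaves a connected graph (no cutvertex). -/
def IsTwoConnected {V : Type} [Fintype V] (G : SimpleGraph V) : Prop :=
  3 ≤ Fintype.card V ∧ G.Connected ∧
    ∀ v : V, (G.induce {w : V | w ≠ v}).Connected

open Finset
open scoped symmDiff

/-- A subspace of the `𝔽₂`-vector space of finite subsets of `α`. -/
structure IsBinarySpace {α : Type*} [DecidableEq α] (Z : Finset (Finset α)) : Prop where
  empty_mem : ∅ ∈ Z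
  symmDiff_mem ⦃F G : Finset α⦄ : F ∈ Z → G ∈ Z → F ∆ G ∈ Z

namespace BinarySpace

variable {α : Type*} {Z : Finset (Finset α)} {E C D F : Finset α} {e f x y : α} {k : ℕ}

def IsCircuit (Z : Finset (Finset α)) (C : Finset α) : Prop :=
  Minimal (fun D ↦ D ∈ Z ∧ D.Nonempty) C

def OnCommonCircuit (Z : Finset (Finset α)) (x y : α) : Prop :=
  ∃ C, IsCircuit Z C ∧ x ∈ C ∧ y ∈ C

structure Connected (Z : Finset (Finset α)) (E : Finset α) : Prop where
  subset : ∀ F ∈ Z, F ⊆ E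
  onCommonCircuit : ∀ x ∈ E, ∀ y ∈ E, OnCommonCircuit Z x y

open Classical in
noncomputable def circuits (Z : Finset (Finset α)) : Finset (Finset α) := {C ∈ Z | IsCircuit Z C}

lemma IsCircuit.mem (hC : IsCircuit Z C) : C ∈ Z := hC.prop.1

lemma IsCircuit.nonempty (hC : IsCircuit Z C) : C.Nonempty := hC.prop.2

lemma IsCircuit.eq_of_subset (hC : IsCircuit Z C) (hD : D ∈ Z) (hDne : D.Nonempty)
    (hDC : D ⊆ C) : D = C :=
  hC.eq_of_le ⟨hD, hDne⟩ hDC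

lemma IsCircuit.exists_mem_notMem (hC : IsCircuit Z C) (hD : D ∈ Z) (hDne : D.Nonempty)
    (hfC : f ∈ C) (hfD : f ∉ D) : ∃ x ∈ D, x ∉ C := by
  by_contra! h
  exact hfD (hC.eq_of_subset hD hDne h ▸ hfC)

lemma exists_isCircuit_subset (hF : F ∈ Z) (hne : F.Nonempty) : ∃ C, IsCircuit Z C ∧ C ⊆ F :=
  let ⟨C, hCF, hC⟩ := exists_minimal_le_of_wellFoundedLT _ F ⟨hF, hne⟩
  ⟨C, hC, hCF⟩

lemma mem_circuits : C ∈ circuits Z ↔ IsCircuit Z C := by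
  simpa [circuits] using fun h : IsCircuit Z C ↦ h.mem

lemma OnCommonCircuit.symm (h : OnCommonCircuit Z x y) : OnCommonCircuit Z y x :=
  let ⟨C, hC, hx, hy⟩ := h
  ⟨C, hC, hy, hx⟩

lemma Connected.singleton_notMem (hconn : Connected Z E) (hE : 2 ≤ #E) (x : α) : {x} ∉ Z := by
  intro hx
  have hxE : x ∈ E := hconn.subset _ hx (mem_singleton_self x)
  obtain ⟨y, hyE, hyx⟩ := exists_mem_ne hE x
  obtain ⟨C, hC, hxC, hyC⟩ := hconn.onCommonCircuit x hxE y hyE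
  rw [← hC.eq_of_subset hx (singleton_nonempty x) (singleton_subset_iff.2 hxC)] at hyC
  exact hyx (mem_singleton.1 hyC)

lemma card_le_two_pow_card (hZE : ∀ F ∈ Z, F ⊆ E) : #Z ≤ 2 ^ #E := by
  simpa using card_le_card fun F hF ↦ mem_powerset.2 (hZE F hF)

variable [DecidableEq α]

def delete (Z : Finset (Finset α)) (e : α) : Finset (Finset α) := {F ∈ Z | e ∉ F}

def contract (Z : Finset (Finset α)) (e : α) : Finset (Finset α) := Z.image (·.erase e)

lemma card_lt_two_pow_card (hZE : ∀ F ∈ Z, F ⊆ E) (he : e ∈ E) (hno : {e} ∉ Z) :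
    #Z < 2 ^ #E := by
  have hsub : Z ⊆ E.powerset.erase {e} := fun F hF ↦
    mem_erase.2 ⟨fun h ↦ hno (h ▸ hF), mem_powerset.2 (hZE F hF)⟩
  have := card_le_card hsub
  rw [card_erase_of_mem (by simpa using he), card_powerset] at this
  have : 0 < 2 ^ #E := by positivity
  omega

lemma mem_delete : F ∈ delete Z e ↔ F ∈ Z ∧ e ∉ F := mem_filter

lemma isCircuit_delete_iff : IsCircuit (delete Z e) C ↔ IsCircuit Z C ∧ e ∉ C := by
  refine ⟨fun hC ↦ ?_, fun ⟨hC, he⟩ ↦ ?_⟩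
  · obtain ⟨hCZ, heC⟩ := mem_delete.1 hC.mem
    exact ⟨⟨⟨hCZ, hC.nonempty⟩, fun D hD hDC ↦
      (hC.eq_of_subset (mem_delete.2 ⟨hD.1, fun h ↦ heC (hDC h)⟩) hD.2 hDC).ge⟩, heC⟩
  · exact ⟨⟨mem_delete.2 ⟨hC.mem, he⟩, hC.nonempty⟩, fun D hD hDC ↦
      (hC.eq_of_subset (mem_delete.1 hD.1).1 hD.2 hDC).ge⟩

lemma circuits_delete : circuits (delete Z e) = {C ∈ circuits Z | e ∉ C} := by
  ext C
  simp [mem_circuits, isCircuit_delete_iff]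

lemma erase_nonempty_of_singleton_notMem (hF : F ∈ Z) (hne : F.Nonempty) (hno : {e} ∉ Z) :
    (F.erase e).Nonempty := by
  rw [nonempty_iff_ne_empty, Ne, erase_eq_empty_iff]
  rintro (rfl | rfl)
  exacts [hne.ne_empty rfl, hno hF]

lemma IsCircuit.isCircuit_contract_erase (hC : IsCircuit Z C) (hno : {e} ∉ Z) (he : e ∈ C) :
    IsCircuit (contract Z e) (C.erase e) := by
  refine ⟨⟨mem_image_of_mem _ hC.mem, erase_nonempty_of_singleton_notMem hC.mem hC.nonempty hno⟩,
    fun D ⟨hD, hDne⟩ hDC ↦ ?_⟩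
  obtain ⟨F, hF, rfl⟩ := mem_image.1 hD
  have hFC : F ⊆ C := fun x hx ↦ by
    by_cases hxe : x = e
    · exact hxe ▸ he
    · exact mem_of_mem_erase (hDC (mem_erase.2 ⟨hxe, hx⟩))
  rw [hC.eq_of_subset hF (hDne.mono (erase_subset e F)) hFC]

lemma exists_isCircuit_erase_eq (hno : {e} ∉ Z) (hD : IsCircuit (contract Z e) D) :
    ∃ C, IsCircuit Z C ∧ C.erase e = D := by
  obtain ⟨F, hF, rfl⟩ := mem_image.1 hD.mem
  obtain ⟨C, hC, hCF⟩ := exists_isCircuit_subset hF (hD.nonempty.mono (erase_subset e F))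
  exact ⟨C, hC, hD.eq_of_subset (mem_image_of_mem _ hC.mem)
    (erase_nonempty_of_singleton_notMem hC.mem hC.nonempty hno) (erase_subset_erase e hCF)⟩

lemma card_filter_circuits_contract_le (hno : {e} ∉ Z) (p : Finset α → Prop) [DecidablePred p] :
    #{D ∈ circuits (contract Z e) | p D} ≤ #{C ∈ circuits Z | p (C.erase e)} := by
  refine (card_le_card (t := {C ∈ circuits Z | p (C.erase e)}.image (·.erase e))
    fun D hD ↦ ?_).trans card_image_le
  obtain ⟨hD, hpD⟩ := mem_filter.1 hD
  obtain ⟨C, hC, rfl⟩ := exists_isCircuit_erase_eq hno (mem_circuits.1 hD)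
  exact mem_image_of_mem _ (mem_filter.2 ⟨mem_circuits.2 hC, hpD⟩)

lemma Connected.subset_delete (hconn : Connected Z E) : ∀ F ∈ delete Z e, F ⊆ E.erase e :=
  fun _ hF _ hx ↦ mem_erase.2
    ⟨fun h ↦ (mem_delete.1 hF).2 (h ▸ hx), hconn.subset _ (mem_delete.1 hF).1 hx⟩

lemma Connected.subset_contract (hconn : Connected Z E) : ∀ F ∈ contract Z e, F ⊆ E.erase e := by
  intro F hF
  obtain ⟨G, hG, rfl⟩ := mem_image.1 hF
  exact erase_subset_erase e (hconn.subset G hG)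

lemma isCircuit_pair (hno : ∀ x, {x} ∉ Z) (h : {e, f} ∈ Z) : IsCircuit Z {e, f} := by
  refine ⟨⟨h, insert_nonempty e {f}⟩, fun D ⟨hD, hDne⟩ hDef ↦ ?_⟩
  by_cases heD : e ∈ D
  · by_cases hfD : f ∈ D
    · exact insert_subset heD (singleton_subset_iff.2 hfD)
    · rw [pair_comm, subset_insert_iff_of_notMem hfD, hDne.subset_singleton_iff] at hDef
      exact absurd (hDef ▸ hD) (hno e)
  · rw [subset_insert_iff_of_notMem heD, hDne.subset_singleton_iff] at hDef
    exact absurd (hDef ▸ hD) (hno f)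

lemma le_card_filter_mem_circuits_of_forall_pair_mem (hconn : Connected Z E) (hE : 2 ≤ #E)
    (he : e ∈ E) (hk : #Z = 2 ^ k) (hpar : ∀ f ∈ E.erase e, {e, f} ∈ Z) :
    k ≤ #{C ∈ circuits Z | e ∈ C} := by
  have hno := hconn.singleton_notMem hE
  have hkE : k < #E := by
    rw [← Nat.pow_lt_pow_iff_right one_lt_two, ← hk]
    exact card_lt_two_pow_card hconn.subset he (hno e)
  have hpairs : #(E.erase e) ≤ #{C ∈ circuits Z | e ∈ C} := by
    refine card_le_card_of_injOn (fun f ↦ {e, f})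
      (fun f hf ↦ by simpa [mem_circuits] using isCircuit_pair hno (hpar f hf))
      fun f hf g _ hfg ↦ ?_
    have : f ∈ ({e, g} : Finset α) := by
      simp only at hfg
      simp [← hfg]
    simpa [(mem_erase.1 hf).1] using this
  rw [card_erase_of_mem he] at hpairs
  omega

end BinarySpace

namespace IsBinarySpace

open BinarySpace

variable {α : Type*} [DecidableEq α] {Z : Finset (Finset α)} {E C F : Finset α} {e g x y z : α}
  {k : ℕ}

lemma sdiff_mem (hZ : IsBinarySpace Z) (hF : F ∈ Z) (hC : C ∈ Z) (hCF : C ⊆ F) : F \ C ∈ Z := by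
  simpa [symmDiff_of_ge hCF] using hZ.symmDiff_mem hF hC

lemma exists_isCircuit_subset_mem (hZ : IsBinarySpace Z) {F : Finset α} (hF : F ∈ Z) (hx : x ∈ F) :
    ∃ C, IsCircuit Z C ∧ C ⊆ F ∧ x ∈ C := by
  obtain ⟨C, hC, hCF⟩ := exists_isCircuit_subset hF ⟨x, hx⟩
  by_cases hxC : x ∈ C
  · exact ⟨C, hC, hCF, hxC⟩
  obtain ⟨D, hD, hDF, hxD⟩ :=
    hZ.exists_isCircuit_subset_mem (hZ.sdiff_mem hF hC.mem hCF) (mem_sdiff.2 ⟨hx, hxC⟩)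
  exact ⟨D, hD, hDF.trans sdiff_subset, hxD⟩
termination_by #F
decreasing_by exact card_lt_card (sdiff_ssubset hCF hC.nonempty)

/-- Whitney's circuit transitivity. -/
lemma exists_isCircuit_subset_union (hZ : IsBinarySpace Z) {C₁ C₂ : Finset α} {f : α}
    (h₁ : IsCircuit Z C₁) (h₂ : IsCircuit Z C₂) (hf₁ : f ∈ C₁) (hf₂ : f ∈ C₂) (he : e ∈ C₁)
    (hg : g ∈ C₂) :
    ∃ D, IsCircuit Z D ∧ D ⊆ C₁ ∪ C₂ ∧ e ∈ D ∧ g ∈ D := by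
  by_cases heC₂ : e ∈ C₂
  · exact ⟨C₂, h₂, subset_union_right, heC₂, hg⟩
  by_cases hgC₁ : g ∈ C₁
  · exact ⟨C₁, h₁, subset_union_left, he, hgC₁⟩
  have hF : C₁ ∆ C₂ ∈ Z := hZ.symmDiff_mem h₁.mem h₂.mem
  have hfF : f ∉ C₁ ∆ C₂ := by simp [mem_symmDiff, hf₁, hf₂]
  obtain ⟨D₁, hD₁, hD₁F, heD₁⟩ :=
    hZ.exists_isCircuit_subset_mem hF (mem_symmDiff.2 (.inl ⟨he, heC₂⟩))
  have hD₁U : D₁ ⊆ C₁ ∪ C₂ := hD₁F.trans symmDiff_subset_union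
  by_cases hgD₁ : g ∈ D₁
  · exact ⟨D₁, hD₁, hD₁U, heD₁, hgD₁⟩
  -- `D₁` meets `C₂` outside `C₁`, and `(C₁ ∆ C₂) \ D₁` meets `C₁` outside `C₂`: so `D₁, C₂` is a
  -- smaller instance.
  obtain ⟨h, hhD₁, hhC₁⟩ := h₁.exists_mem_notMem hD₁.mem hD₁.nonempty hf₁ (hfF <| hD₁F ·)
  have hhC₂ : h ∈ C₂ := (mem_union.1 (hD₁U hhD₁)).resolve_left hhC₁
  obtain ⟨x, hxR, hxC₂⟩ := h₂.exists_mem_notMem (hZ.sdiff_mem hF hD₁.mem hD₁F)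
    ⟨g, mem_sdiff.2 ⟨mem_symmDiff.2 (.inr ⟨hg, hgC₁⟩), hgD₁⟩⟩ hf₂ fun h ↦ hfF (mem_sdiff.1 h).1
  obtain ⟨D, hD, hDU, heD, hgD⟩ := hZ.exists_isCircuit_subset_union hD₁ h₂ hhD₁ hhC₂ heD₁ hg
  exact ⟨D, hD, hDU.trans (union_subset hD₁U subset_union_right), heD, hgD⟩
termination_by #(C₁ ∪ C₂)
decreasing_by
  refine card_lt_card ((ssubset_iff_of_subset (union_subset hD₁U subset_union_right)).2
    ⟨x, symmDiff_subset_union (mem_sdiff.1 hxR).1, ?_⟩)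
  simp [hxC₂, (mem_sdiff.1 hxR).2]

lemma onCommonCircuit_trans (hZ : IsBinarySpace Z) (hxy : OnCommonCircuit Z x y)
    (hyz : OnCommonCircuit Z y z) : OnCommonCircuit Z x z :=
  let ⟨_, hC₁, hx, hy₁⟩ := hxy
  let ⟨_, hC₂, hy₂, hz⟩ := hyz
  let ⟨D, hD, _, hxD, hzD⟩ := hZ.exists_isCircuit_subset_union hC₁ hC₂ hy₁ hy₂ hx hz
  ⟨D, hD, hxD, hzD⟩

lemma delete (hZ : IsBinarySpace Z) : IsBinarySpace (delete Z e) where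
  empty_mem := mem_delete.2 ⟨hZ.empty_mem, notMem_empty e⟩
  symmDiff_mem F G hF hG := by
    rw [mem_delete] at *
    exact ⟨hZ.symmDiff_mem hF.1 hG.1, by simp [mem_symmDiff, hF.2, hG.2]⟩

lemma contract (hZ : IsBinarySpace Z) : IsBinarySpace (contract Z e) where
  empty_mem := mem_image.2 ⟨∅, hZ.empty_mem, erase_empty e⟩
  symmDiff_mem _ _ hF hG := by
    obtain ⟨F, hFZ, rfl⟩ := mem_image.1 hF
    obtain ⟨G, hGZ, rfl⟩ := mem_image.1 hG
    refine mem_image.2 ⟨F ∆ G, hZ.symmDiff_mem hFZ hGZ, ?_⟩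
    ext x
    simp only [mem_erase, mem_symmDiff]
    tauto

/-- Adding a fixed member through `e` swaps the members avoiding `e` with those containing it. -/
lemma card_delete_mul_two (hZ : IsBinarySpace Z) (hF : F ∈ Z) (he : e ∈ F) :
    #(BinarySpace.delete Z e) * 2 = #Z := by
  have hswap : #{G ∈ Z | e ∉ G} = #{G ∈ Z | ¬e ∉ G} := by
    refine card_nbij' (· ∆ F) (· ∆ F) ?_ ?_ ?_ ?_ <;>
      intro G hG <;> simp only [coe_filter, Set.mem_ofPred_eq] at hG
    · simpa [mem_symmDiff, he, hG.2] using hZ.symmDiff_mem hG.1 hF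
    · simpa [mem_symmDiff, he, hG.2] using hZ.symmDiff_mem hG.1 hF
    all_goals exact symmDiff_symmDiff_cancel_right F G
  have := card_filter_add_card_filter_not (s := Z) (fun G ↦ e ∉ G)
  rw [BinarySpace.delete]
  omega

lemma card_delete (hZ : IsBinarySpace Z) (hk : #Z = 2 ^ k) (hF : F ∈ Z) (he : e ∈ F) :
    #(BinarySpace.delete Z e) = 2 ^ (k - 1) := by
  have := hZ.card_delete_mul_two hF he
  cases k with
  | zero => omega
  | succ k =>
    rw [pow_succ] at hk
    rw [Nat.add_sub_cancel]
    omega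

lemma card_contract (hZ : IsBinarySpace Z) (hno : {e} ∉ Z) : #(BinarySpace.contract Z e) = #Z := by
  refine card_image_of_injOn fun F hF G hG hFG ↦ ?_
  have hsub : F ∆ G ⊆ {e} := fun x hx ↦ by
    by_contra hxe
    have := Finset.ext_iff.1 hFG x
    simp only [mem_erase, mem_singleton.not.1 hxe, ne_eq, not_false_eq_true, true_and] at this
    exact (mem_symmDiff.1 hx).elim (fun h ↦ h.2 (this.1 h.1)) fun h ↦ h.2 (this.2 h.1)
  rcases subset_singleton_iff.1 hsub with h | h
  · exact symmDiff_eq_empty.1 h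
  · exact absurd (h ▸ hZ.symmDiff_mem hF hG) hno

lemma exists_card_eq_two_pow {Z : Finset (Finset α)} (hZ : IsBinarySpace Z) :
    ∃ k, #Z = 2 ^ k := by
  by_cases h : ∀ F ∈ Z, F = ∅
  · exact ⟨0, card_eq_one.2 ⟨∅, eq_singleton_iff_unique_mem.2 ⟨hZ.empty_mem, h⟩⟩⟩
  obtain ⟨F, hF, e, he⟩ : ∃ F ∈ Z, F.Nonempty := by
    simpa [nonempty_iff_ne_empty] using h
  obtain ⟨k, hk⟩ := (hZ.delete (e := e)).exists_card_eq_two_pow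
  exact ⟨k + 1, by rw [← hZ.card_delete_mul_two hF he, hk, pow_succ]⟩
termination_by #Z
decreasing_by
  exact card_lt_card ((ssubset_iff_of_subset (filter_subset _ _)).2 ⟨F, hF, by simp [he]⟩)

lemma card_circuits_lt (hZ : IsBinarySpace Z) : #(circuits Z) < #Z :=
  card_lt_card ((ssubset_iff_of_subset fun _ hC ↦ (mem_circuits.1 hC).mem).2
    ⟨∅, hZ.empty_mem, fun h ↦ not_nonempty_empty (mem_circuits.1 h).nonempty⟩)

/-- Tutte's lemma for binary spaces. -/
theorem connected_delete_or_connected_contract (hZ : IsBinarySpace Z) (hconn : Connected Z E)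
    (hE : 2 ≤ #E) :
    Connected (BinarySpace.delete Z e) (E.erase e) ∨
      Connected (BinarySpace.contract Z e) (E.erase e) := by
  refine or_iff_not_imp_left.2 fun hdel ↦ ⟨hconn.subset_contract, ?_⟩
  obtain ⟨u, hu, v, hv, huv⟩ : ∃ u ∈ E.erase e, ∃ v ∈ E.erase e,
      ¬OnCommonCircuit (BinarySpace.delete Z e) u v := by
    by_contra! h
    exact hdel ⟨hconn.subset_delete, h⟩
  have hno := hconn.singleton_notMem hE e
  have hthrough : ∀ C, IsCircuit Z C → u ∈ C → v ∈ C → e ∈ C := fun C hC huC hvC ↦ by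
    by_contra heC
    exact huv ⟨C, isCircuit_delete_iff.2 ⟨hC, heC⟩, huC, hvC⟩
  have hpush : ∀ {x y}, x ∈ E.erase e → y ∈ E.erase e → ∀ C, IsCircuit Z C → e ∈ C → x ∈ C →
      y ∈ C → OnCommonCircuit (BinarySpace.contract Z e) x y :=
    fun hx hy C hC heC hxC hyC ↦ ⟨C.erase e, hC.isCircuit_contract_erase hno heC,
      mem_erase.2 ⟨(mem_erase.1 hx).1, hxC⟩, mem_erase.2 ⟨(mem_erase.1 hy).1, hyC⟩⟩
  have hconn' := hconn.onCommonCircuit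
  obtain ⟨R, hR, huR, hvR⟩ := hconn' u (mem_of_mem_erase hu) v (mem_of_mem_erase hv)
  have huv' := hpush hu hv R hR (hthrough R hR huR hvR) huR hvR
  have hlink : ∀ w ∈ E.erase e, OnCommonCircuit (BinarySpace.contract Z e) w u := by
    intro w hw
    obtain ⟨A, hA, hwA, huA⟩ := hconn' w (mem_of_mem_erase hw) u (mem_of_mem_erase hu)
    by_cases heA : e ∈ A
    · exact hpush hw hu A hA heA hwA huA
    obtain ⟨B, hB, hwB, hvB⟩ := hconn' w (mem_of_mem_erase hw) v (mem_of_mem_erase hv)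
    by_cases heB : e ∈ B
    · exact hZ.contract.onCommonCircuit_trans (hpush hw hv B hB heB hwB hvB) huv'.symm
    obtain ⟨D, hD, hDAB, huD, hvD⟩ := hZ.exists_isCircuit_subset_union hA hB hwA hwB huA hvB
    exact absurd (hDAB (hthrough D hD huD hvD)) (by simp [heA, heB])
  exact fun x hx y hy ↦ hZ.contract.onCommonCircuit_trans (hlink x hx) (hlink y hy).symm

/-- Induction on `#E`: unless every other element is parallel to `e`, apply Tutte's lemma at an
element `f` that is not. -/
theorem le_card_filter_mem_circuits {Z : Finset (Finset α)} {E : Finset α} {k : ℕ}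
    (hZ : IsBinarySpace Z) (hconn : Connected Z E) (hE : 2 ≤ #E) (he : e ∈ E)
    (hk : #Z = 2 ^ k) : k ≤ #{C ∈ circuits Z | e ∈ C} := by
  by_cases hpar : ∀ f ∈ E.erase e, {e, f} ∈ Z
  · exact le_card_filter_mem_circuits_of_forall_pair_mem hconn hE he hk hpar
  have hno := hconn.singleton_notMem hE
  obtain ⟨f, hf, hef⟩ : ∃ f ∈ E.erase e, {e, f} ∉ Z := by simpa [and_assoc] using hpar
  have hfe : f ≠ e := (mem_erase.1 hf).1
  have hfE := mem_of_mem_erase hf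
  obtain ⟨C, hC, heC, hfC⟩ := hconn.onCommonCircuit e he f hfE
  have hE' : 2 ≤ #(E.erase f) := by
    have hpair : {e, f} ⊂ C :=
      (insert_subset heC (singleton_subset_iff.2 hfC)).ssubset_of_ne fun h ↦ hef (h ▸ hC.mem)
    have := (card_lt_card hpair).trans_le (card_le_card (hconn.subset C hC.mem))
    rw [card_pair hfe.symm] at this
    rw [card_erase_of_mem hfE]
    omega
  have heE' : e ∈ E.erase f := mem_erase.2 ⟨hfe.symm, he⟩
  rcases hZ.connected_delete_or_connected_contract hconn hE (e := f) with hdel | hcon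
  · have ih := hZ.delete.le_card_filter_mem_circuits hdel hE' heE' (hZ.card_delete hk hC.mem hfC)
    have hlt : {C ∈ circuits (BinarySpace.delete Z f) | e ∈ C} ⊂ {C ∈ circuits Z | e ∈ C} := by
      refine (ssubset_iff_of_subset fun D hD ↦ ?_).2 ⟨C, ?_, ?_⟩ <;>
        simp_all [mem_circuits, isCircuit_delete_iff]
    have := card_lt_card hlt
    omega
  · have ih := hZ.contract.le_card_filter_mem_circuits hcon hE' heE'
      (by rw [hZ.card_contract (hno f), hk])
    have := card_filter_circuits_contract_le (hno f) (e ∈ ·)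
    simp only [mem_erase, ne_eq, hfe.symm, not_false_eq_true, true_and] at this
    omega
termination_by #E
decreasing_by all_goals exact card_erase_lt_of_mem hfE

/-- Induction on `#E` by Tutte's lemma at any `e ∈ E`: deleting `e` halves `Z` and loses the at
least `k` circuits through `e`; contracting `e` keeps `#Z` and does not create circuits. -/
theorem choose_two_le_card_circuits {Z : Finset (Finset α)} {E : Finset α} {k : ℕ}
    (hZ : IsBinarySpace Z) (hconn : Connected Z E) (hE : E.Nonempty) (hk : #Z = 2 ^ k) :
    (k + 1).choose 2 ≤ #(circuits Z) := by
  obtain ⟨e, he⟩ := hE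
  obtain ⟨C, hC, heC, -⟩ := hconn.onCommonCircuit e he e he
  have hpos : 0 < #(circuits Z) := card_pos.2 ⟨C, mem_circuits.2 hC⟩
  by_cases hE2 : #E < 2
  · have : k < 2 := by
      rw [← Nat.pow_lt_pow_iff_right one_lt_two, ← hk]
      exact (card_le_two_pow_card hconn.subset).trans_lt (Nat.pow_lt_pow_right one_lt_two hE2)
    interval_cases k
    · simp
    · simpa using hpos
  have hE' : (E.erase e).Nonempty := by
    rw [← card_pos, card_erase_of_mem he]
    omega
  have hno := hconn.singleton_notMem (not_lt.1 hE2)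
  rcases hZ.connected_delete_or_connected_contract hconn (not_lt.1 hE2) (e := e) with hdel | hcon
  · have ih := hZ.delete.choose_two_le_card_circuits hdel hE' (hZ.card_delete hk hC.mem heC)
    have hthrough := hZ.le_card_filter_mem_circuits hconn (not_lt.1 hE2) he hk
    have hsplit := card_filter_add_card_filter_not (s := circuits Z) (e ∈ ·)
    rw [circuits_delete] at ih
    cases k with
    | zero => simp
    | succ j =>
      rw [Nat.add_sub_cancel] at ih
      have := Nat.choose_succ_succ' (j + 1) 1
      simp only [Nat.choose_one_right, Nat.reduceAdd] at this
      omega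
  · have ih := hZ.contract.choose_two_le_card_circuits hcon hE'
      (by rw [hZ.card_contract (hno e), hk])
    have := card_filter_circuits_contract_le (hno e) fun _ ↦ True
    simp only [filter_true] at this
    omega
termination_by #E
decreasing_by all_goals exact card_erase_lt_of_mem he

end IsBinarySpace

theorem Finset.even_card_symmDiff {α : Type*} [DecidableEq α] {s t : Finset α} (hs : Even #s)
    (ht : Even #t) : Even #(s ∆ t) := by
  have hsub : s ∩ t ⊆ s ∪ t := inter_subset_union
  have := card_union_add_card_inter s t
  have := card_le_card hsub
  rw [symmDiff_eq_sup_sdiff_inf, sup_eq_union, inf_eq_inter, card_sdiff_of_subset hsub]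
  obtain ⟨a, ha⟩ := hs
  obtain ⟨b, hb⟩ := ht
  exact ⟨a + b - #(s ∩ t), by omega⟩

theorem SimpleGraph.Subgraph.Connected.forall_of_adj {V : Type*} {G : SimpleGraph V}
    {H : G.Subgraph} (hH : H.Connected) {P : V → Prop} (hP : ∀ ⦃a b⦄, H.Adj a b → P a → P b)
    {a b : V} (ha : a ∈ H.verts) (hb : b ∈ H.verts) (hPa : P a) : P b := by
  suffices ∀ x y : H.verts, H.coe.Walk x y → P x → P y from
    this ⟨a, ha⟩ ⟨b, hb⟩ (hH.preconnected _ _).some hPa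
  intro x y p
  induction p with
  | nil => exact id
  | cons h _ ih => exact fun hx ↦ ih (hP h hx)

theorem SimpleGraph.Walk.exists_isPath_forall_adj_mem_support {V : Type*} [Fintype V]
    {G : SimpleGraph V} {u x : V} (p : G.Walk u x) (hp : p.IsPath) :
    ∃ (u' : V) (q : G.Walk u' x), q.IsPath ∧ ∀ w, G.Adj u' w → w ∈ q.support := by
  by_cases h : ∀ w, G.Adj u w → w ∈ p.support
  · exact ⟨u, p, hp, h⟩
  obtain ⟨w, hw, hwp⟩ : ∃ w, G.Adj u w ∧ w ∉ p.support := by simpa using h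
  exact (p.cons hw.symm).exists_isPath_forall_adj_mem_support (hp.cons hwp)
termination_by Fintype.card V - p.length
decreasing_by
  have := (hp.cons hwp : (p.cons hw.symm).IsPath).length_lt
  simp only [length_cons] at this ⊢
  omega

theorem SimpleGraph.Walk.IsCycle.isCycleSubgraph_toSubgraph {V : Type} {G : SimpleGraph V}
    {v : V} {c : G.Walk v v} (hc : c.IsCycle) : IsCycleSubgraph c.toSubgraph :=
  ⟨⟨v, c.start_mem_verts_toSubgraph⟩, c.toSubgraph_connected,
    fun _ hw ↦ hc.ncard_neighborSet_toSubgraph_eq_two (c.mem_verts_toSubgraph.1 hw)⟩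

open BinarySpace

namespace SimpleGraph

variable {V : Type} [Fintype V] [DecidableEq V]

def IsEvenEdgeSet (F : Finset (Sym2 V)) : Prop := ∀ v, Even #{w | s(v, w) ∈ F}

open Classical in
noncomputable def cycleSpace (G : SimpleGraph V) [DecidableRel G.Adj] :
    Finset (Finset (Sym2 V)) :=
  {F ∈ G.edgeFinset.powerset | IsEvenEdgeSet F}

noncomputable def Subgraph.edgeFinset {G : SimpleGraph V} (H : G.Subgraph) : Finset (Sym2 V) :=
  H.edgeSet.toFinite.toFinset

omit [DecidableEq V] in
@[simp]
lemma Subgraph.mem_edgeFinset {G : SimpleGraph V} {H : G.Subgraph} {e : Sym2 V} :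
    e ∈ H.edgeFinset ↔ e ∈ H.edgeSet :=
  Set.Finite.mem_toFinset _

variable {G : SimpleGraph V} [DecidableRel G.Adj] {F : Finset (Sym2 V)}

lemma mem_cycleSpace : F ∈ G.cycleSpace ↔ F ⊆ G.edgeFinset ∧ IsEvenEdgeSet F := by
  simp [cycleSpace]

lemma isBinarySpace_cycleSpace : IsBinarySpace G.cycleSpace where
  empty_mem := mem_cycleSpace.2 ⟨empty_subset _, fun v ↦ by simp⟩
  symmDiff_mem F F' hF hF' := by
    rw [mem_cycleSpace] at *
    refine ⟨symmDiff_subset_union.trans (union_subset hF.1 hF'.1), fun v ↦ ?_⟩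
    have : ({w | s(v, w) ∈ F ∆ F'} : Finset V) =
        ({w | s(v, w) ∈ F} : Finset V) ∆ ({w | s(v, w) ∈ F'} : Finset V) := by
      ext w
      simp [mem_symmDiff]
    exact this ▸ even_card_symmDiff (hF.2 v) (hF'.2 v)

end SimpleGraph

namespace IsCycleSubgraph

variable {V : Type} {G : SimpleGraph V} {H : G.Subgraph} {D : Finset (Sym2 V)} {a b c v : V}

lemma mem_verts_iff (hH : IsCycleSubgraph H) : v ∈ H.verts ↔ ∃ w, H.Adj v w := by
  refine ⟨fun hv ↦ ?_, fun ⟨_, h⟩ ↦ h.fst_mem⟩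
  have : (H.neighborSet v).ncard ≠ 0 := by rw [hH.2.2 v hv]; norm_num
  exact Set.nonempty_of_ncard_ne_zero this

variable [Fintype V] [DecidableEq V]

lemma card_filter_mem_edgeFinset (hH : IsCycleSubgraph H) (hv : v ∈ H.verts) :
    #{w | s(v, w) ∈ H.edgeFinset} = 2 := by
  rw [← hH.2.2 v hv, ← Set.ncard_coe_finset]
  congr 1
  ext w
  simp

lemma isEvenEdgeSet_edgeFinset (hH : IsCycleSubgraph H) : IsEvenEdgeSet H.edgeFinset := by
  intro v
  by_cases hv : v ∈ H.verts
  · rw [hH.card_filter_mem_edgeFinset hv]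
    exact even_two
  · have : ({w | s(v, w) ∈ H.edgeFinset} : Finset V) = ∅ := by
      simpa [filter_eq_empty_iff] using fun w (h : H.Adj v w) ↦ hv h.fst_mem
    simp [this]

/-- In a cycle every vertex has degree two, so an even subset of its edges containing one edge
at `a` contains both. -/
lemma mem_of_adj (hH : IsCycleSubgraph H) (hDH : D ⊆ H.edgeFinset) (hD : IsEvenEdgeSet D)
    (hab : s(a, b) ∈ D) (hac : H.Adj a c) : s(a, c) ∈ D := by
  have hsub : ({w | s(a, w) ∈ D} : Finset V) ⊆ ({w | s(a, w) ∈ H.edgeFinset} : Finset V) := by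
    intro w
    simpa using fun h ↦ Subgraph.mem_edgeSet.1 (Subgraph.mem_edgeFinset.1 (hDH h))
  have h2 := hH.card_filter_mem_edgeFinset hac.fst_mem
  have hpos : 0 < #{w | s(a, w) ∈ D} := card_pos.2 ⟨b, by simpa using hab⟩
  have heq := eq_of_subset_of_card_le hsub (by
    obtain ⟨m, hm⟩ := hD a
    have := card_le_card hsub
    omega)
  have : c ∈ ({w | s(a, w) ∈ H.edgeFinset} : Finset V) := by simpa using hac
  rw [← heq] at this
  simpa using this

lemma eq_of_subset_of_isEvenEdgeSet (hH : IsCycleSubgraph H) (hDH : D ⊆ H.edgeFinset)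
    (hD : IsEvenEdgeSet D) (hne : D.Nonempty) : D = H.edgeFinset := by
  obtain ⟨e, he⟩ := hne
  induction e using Sym2.ind with | _ x y => ?_
  have hxy : H.Adj x y := by simpa using hDH he
  have hall : ∀ v ∈ H.verts, ∃ w, s(v, w) ∈ D := fun v hv ↦
    hH.2.1.forall_of_adj (P := fun v ↦ ∃ w, s(v, w) ∈ D)
      (fun a b hab ⟨_, haw⟩ ↦ ⟨a, Sym2.eq_swap ▸ hH.mem_of_adj hDH hD haw hab⟩)
      hxy.fst_mem hv ⟨y, he⟩
  refine hDH.antisymm fun e he ↦ ?_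
  induction e using Sym2.ind with | _ a c => ?_
  have hac : H.Adj a c := by simpa using he
  obtain ⟨b, hab⟩ := hall a hac.fst_mem
  exact hH.mem_of_adj hDH hD hab hac

variable [DecidableRel G.Adj]

lemma isCircuit_edgeFinset (hH : IsCycleSubgraph H) : IsCircuit G.cycleSpace H.edgeFinset := by
  refine ⟨⟨mem_cycleSpace.2 ⟨fun e he ↦ ?_, hH.isEvenEdgeSet_edgeFinset⟩, ?_⟩,
    fun D ⟨hD, hDne⟩ hDH ↦ (hH.eq_of_subset_of_isEvenEdgeSet hDH (mem_cycleSpace.1 hD).2 hDne).ge⟩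
  · exact mem_edgeFinset.2 (H.edgeSet_subset (Subgraph.mem_edgeFinset.1 he))
  · obtain ⟨v, hv⟩ := hH.1
    obtain ⟨w, hw⟩ := hH.mem_verts_iff.1 hv
    exact ⟨s(v, w), by simpa using hw⟩

end IsCycleSubgraph

namespace SimpleGraph

variable {V : Type} [Fintype V] [DecidableEq V] {G : SimpleGraph V} [DecidableRel G.Adj]
  {F C : Finset (Sym2 V)}

/-- The first vertex `u` of a maximal path in the graph with edge set `F` has an even, hence at
least two, number of `F`-neighbours, all on the path; closing the path at the one that does not
follow `u` gives a cycle. -/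
lemma exists_isCycleSubgraph_edgeFinset_subset (hF : F ∈ G.cycleSpace) (hne : F.Nonempty) :
    ∃ H : G.Subgraph, IsCycleSubgraph H ∧ H.edgeFinset ⊆ F := by
  obtain ⟨hFG, hFeven⟩ := mem_cycleSpace.1 hF
  have hGadj : ∀ {a b}, s(a, b) ∈ F → G.Adj a b := fun h ↦ by simpa using hFG h
  set G' := fromEdgeSet (F : Set (Sym2 V))
  have hle : G' ≤ G := fun _ _ h ↦ hGadj ((fromEdgeSet_adj _).1 h).1
  obtain ⟨e, he⟩ := hne
  induction e using Sym2.ind with | _ x y => ?_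
  obtain ⟨u, p, hp, hmax⟩ := (Walk.nil : G'.Walk x x).exists_isPath_forall_adj_mem_support .nil
  have hpos : 0 < #{w | s(u, w) ∈ F} := by
    by_cases hnil : p.Nil
    · obtain rfl := hnil.eq
      exact card_pos.2 ⟨y, by simpa using he⟩
    · exact card_pos.2 ⟨p.snd, by simpa using ((fromEdgeSet_adj _).1 (p.adj_snd hnil)).1⟩
  obtain ⟨w, hw, hwsnd⟩ := exists_mem_ne (s := {w | s(u, w) ∈ F})
    (by obtain ⟨m, hm⟩ := hFeven u; omega) p.snd
  have huw : G'.Adj u w :=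
    (fromEdgeSet_adj _).2 ⟨by simpa using hw, (hGadj (by simpa using hw)).ne⟩
  have hwp := hmax w huw
  have hc : ((p.takeUntil w hwp).cons huw.symm).IsCycle := by
    refine (Walk.cons_isCycle_iff _ _).2 ⟨hp.takeUntil hwp, fun h ↦ hwsnd ?_⟩
    have := (p.mem_edges_toSubgraph).2 (p.edges_takeUntil_subset_edges hwp h)
    exact (hp.snd_of_toSubgraph_adj (Subgraph.mem_edgeSet.1 this).symm).symm
  refine ⟨_, (hc.mapLe hle).isCycleSubgraph_toSubgraph, fun e he ↦ ?_⟩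
  rw [Subgraph.mem_edgeFinset, Walk.mem_edges_toSubgraph, Walk.edges_mapLe_eq_edges] at he
  have := Walk.edges_subset_edgeSet _ he
  rw [edgeSet_fromEdgeSet] at this
  exact this.1

lemma isCircuit_cycleSpace_iff :
    IsCircuit G.cycleSpace C ↔ ∃ H : G.Subgraph, IsCycleSubgraph H ∧ H.edgeFinset = C := by
  refine ⟨fun hC ↦ ?_, fun ⟨H, hH, hHC⟩ ↦ hHC ▸ hH.isCircuit_edgeFinset⟩
  obtain ⟨H, hH, hHC⟩ := exists_isCycleSubgraph_edgeFinset_subset hC.mem hC.nonempty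
  exact ⟨H, hH, hC.eq_of_subset hH.isCircuit_edgeFinset.mem hH.isCircuit_edgeFinset.nonempty hHC⟩

omit [DecidableEq V] [DecidableRel G.Adj] in
lemma injOn_edgeFinset : Set.InjOn Subgraph.edgeFinset {H : G.Subgraph | IsCycleSubgraph H} := by
  intro H₁ h₁ H₂ h₂ he
  have hadj : ∀ a b, H₁.Adj a b ↔ H₂.Adj a b := fun a b ↦ by
    rw [← Subgraph.mem_edgeSet, ← Subgraph.mem_edgeSet, ← Subgraph.mem_edgeFinset, he,
      Subgraph.mem_edgeFinset]
  ext v w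
  · rw [IsCycleSubgraph.mem_verts_iff h₁, IsCycleSubgraph.mem_verts_iff h₂]
    simp only [hadj]
  · exact hadj v w

lemma cycleCount_eq_card_circuits : cycleCount G = #(circuits G.cycleSpace) := by
  rw [cycleCount, ← injOn_edgeFinset.ncard_image, ← Set.ncard_coe_finset]
  congr 1
  ext C
  simp [mem_circuits, isCircuit_cycleSpace_iff]

end SimpleGraph

namespace IsTwoConnected

variable {V : Type} [Fintype V] {G : SimpleGraph V} {a b v x y : V}

lemma exists_adj_ne (hG : IsTwoConnected G) (hxy : G.Adj x y) : ∃ b, G.Adj x b ∧ b ≠ y := by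
  classical
  obtain ⟨z, -, hz⟩ := exists_mem_notMem_of_card_lt_card (s := {x, y}) (t := univ)
    (card_le_two.trans_lt (by rw [card_univ]; exact hG.1))
  simp only [mem_insert, mem_singleton, not_or] at hz
  obtain ⟨⟨b, hby⟩, hb⟩ := ((hG.2.2 y).preconnected ⟨x, hxy.ne⟩ ⟨z, hz.2⟩).nonempty_neighborSet_left
    (by simpa using Ne.symm hz.1)
  exact ⟨b, hb, hby⟩

lemma exists_isCycle_mem_edges (hG : IsTwoConnected G) (hva : G.Adj v a) (hvb : G.Adj v b)
    (hab : a ≠ b) : ∃ c : G.Walk v v, c.IsCycle ∧ s(v, a) ∈ c.edges ∧ s(v, b) ∈ c.edges := by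
  classical
  obtain ⟨q⟩ := (hG.2.2 v).preconnected ⟨a, hva.ne'⟩ ⟨b, hvb.ne'⟩
  set p : G.Walk a b := q.toPath.1.map (Embedding.induce _).toHom
  have hp : p.IsPath := q.toPath.2.map (Embedding.induce (G := G) _).injective
  have hvp : v ∉ p.support := fun h ↦ by
    obtain ⟨y, -, hy⟩ := List.mem_map.1 (Walk.support_map _ _ ▸ h)
    exact y.2 hy
  refine ⟨(p.concat hvb.symm).cons hva, (Walk.cons_isCycle_iff _ _).2 ⟨hp.concat hvp _, ?_⟩,
    by simp, by simp [Walk.edges_concat]⟩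
  rw [Walk.edges_concat, List.concat_eq_append, List.mem_append, not_or]
  exact ⟨fun h ↦ hvp (p.fst_mem_support_of_mem_edges h), by simp [hab, hvb.ne]⟩

variable [DecidableRel G.Adj]

lemma edgeFinset_nonempty (hG : IsTwoConnected G) : G.edgeFinset.Nonempty := by
  obtain ⟨v, w, hvw⟩ := Fintype.exists_pair_of_one_lt_card (α := V) (by have := hG.1; omega)
  obtain ⟨b, hb⟩ := (hG.2.1.preconnected v w).nonempty_neighborSet_left hvw
  exact ⟨s(v, b), by simpa using hb⟩

variable [DecidableEq V]

lemma onCommonCircuit_of_adj (hG : IsTwoConnected G) (hva : G.Adj v a) (hvb : G.Adj v b) :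
    OnCommonCircuit G.cycleSpace s(v, a) s(v, b) := by
  have key : ∀ {b}, G.Adj v b → a ≠ b → OnCommonCircuit G.cycleSpace s(v, a) s(v, b) :=
    fun hvb hab ↦ by
      obtain ⟨c, hc, ha, hb⟩ := hG.exists_isCycle_mem_edges hva hvb hab
      exact ⟨_, hc.isCycleSubgraph_toSubgraph.isCircuit_edgeFinset,
        by simpa [Walk.mem_edges_toSubgraph] using ha,
        by simpa [Walk.mem_edges_toSubgraph] using hb⟩
  obtain rfl | hab := eq_or_ne a b
  · obtain ⟨b', hb', hb'a⟩ := hG.exists_adj_ne hva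
    obtain ⟨C, hC, hC', -⟩ := key hb' hb'a.symm
    exact ⟨C, hC, hC', hC'⟩
  · exact key hvb hab

lemma onCommonCircuit_of_walk (hG : IsTwoConnected G) {u w : V} (p : G.Walk u w)
    (ha : G.Adj u a) (hb : G.Adj w b) : OnCommonCircuit G.cycleSpace s(u, a) s(w, b) := by
  induction p generalizing a with
  | nil => exact hG.onCommonCircuit_of_adj ha hb
  | cons h q ih =>
    refine isBinarySpace_cycleSpace.onCommonCircuit_trans (hG.onCommonCircuit_of_adj ha h) ?_
    rw [Sym2.eq_swap]
    exact ih h.symm hb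

lemma connected_cycleSpace (hG : IsTwoConnected G) : Connected G.cycleSpace G.edgeFinset where
  subset _ hF := (mem_cycleSpace.1 hF).1
  onCommonCircuit e he f hf := by
    induction e using Sym2.ind with | _ a a' => ?_
    induction f using Sym2.ind with | _ b b' => ?_
    exact hG.onCommonCircuit_of_walk (hG.2.1.preconnected a b).some (by simpa using he)
      (by simpa using hf)

end IsTwoConnected

/-- A finite 2-connected simple graph with more than 7 cycles has at least 10 cycles;
in particular, no finite 2-connected simple graph has exactly 8 or exactly 9 cycles. -/
theorem cycle_count_gap_eight_nine {V : Type} [Fintype V] (G : SimpleGraph V)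
    (hG : IsTwoConnected G) :
    (7 < cycleCount G → 10 ≤ cycleCount G) ∧ cycleCount G ≠ 8 ∧ cycleCount G ≠ 9 := by
  classical
  have hZ := G.isBinarySpace_cycleSpace
  obtain ⟨k, hk⟩ := hZ.exists_card_eq_two_pow
  have hupper : cycleCount G < 2 ^ k := G.cycleCount_eq_card_circuits ▸ hk ▸ hZ.card_circuits_lt
  have hlower : (k + 1).choose 2 ≤ cycleCount G := G.cycleCount_eq_card_circuits ▸
    hZ.choose_two_le_card_circuits hG.connected_cycleSpace hG.edgeFinset_nonempty hk
  have hgap : 7 < cycleCount G → 10 ≤ cycleCount G := fun h7 ↦ by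
    have hk4 : 4 ≤ k := by
      by_contra! hk3
      interval_cases k <;> omega
    calc 10 = (4 + 1).choose 2 := rfl
      _ ≤ (k + 1).choose 2 := Nat.choose_le_choose 2 (by omega)
      _ ≤ cycleCount G := hlower
  exact ⟨hgap, fun h ↦ by have := hgap (by omega); omega, fun h ↦ by have := hgap (by omega); omega⟩
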